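/- arXiv:2602.02759 — 2 statements merged into one kernel-verified Lean document; each statement's English description precedes it below -/
import Mathlib

section
/- For the (α,β)-divergence with α, β, α+β ≠ 0, α > 0 and 0 < β < 1, decompose L_{α,β}(x,y) into the convex part L^vex(x,y) = −(1/(αβ))·x^α·y^β (convex in y) and the concave remainder L^cave(x,y) = L_{α,β}(x,y) − L^vex(x,y); then the decomposability identity holds: ∂_y L^vex(x,λy) + ∂_y L^cave(x,y) = (λ^{β−1}/α)·(λ^{1−β}·y^{α+β−1} − x^α·y^{β−1}). -/
/-- Decomposability identity for the (α,β)-divergence with α > 0 and 0 < β < 1: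
the convex part L^vex(x,y) = −(1/(αβ)) xᵅ yᵝ is convex in y, and
∂_y L^vex(x, λy) + ∂_y L^cave(x, y) = (λ^{β−1}/α)(λ^{1−β} y^{α+β−1} − xᵅ y^{β−1}). -/
theorem stmt_12 (α β : ℝ) (hα : 0 < α) (hβ0 : 0 < β) (hβ1 : β < 1) (hαβ : α + β ≠ 0) :
    ∀ x : ℝ, 0 < x →
      ConvexOn ℝ (Set.Ioi (0:ℝ)) (fun y : ℝ => -(1 / (α * β)) * (x ^ α * y ^ β)) ∧
      (∀ l y : ℝ, 0 < l → 0 < y →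
        deriv (fun z : ℝ => -(1 / (α * β)) * (x ^ α * z ^ β)) (l * y) +
          deriv (fun z : ℝ => (1 / (α * β)) * ((α / (α + β)) * x ^ (α + β)
              + (β / (α + β)) * z ^ (α + β))) y =
        (l ^ (β - 1) / α) * (l ^ (1 - β) * y ^ (α + β - 1) - x ^ α * y ^ (β - 1))) := by
  intro x hx
  constructor
  · have hc : ConcaveOn ℝ (Set.Ioi (0:ℝ)) (fun y : ℝ => y ^ β) :=
      (Real.concaveOn_rpow hβ0.le hβ1.le).subset Set.Ioi_subset_Ici_self (convex_Ioi _)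
    have hsmul : ConcaveOn ℝ (Set.Ioi (0:ℝ)) (fun y : ℝ => (1 / (α * β) * x ^ α) • y ^ β) :=
      hc.smul (by positivity)
    have := hsmul.neg
    convert this using 2 with y
    · rfl
    · rfl
    simp [smul_eq_mul]; ring
  · intro l y hl hy
    have hly : (0:ℝ) < l * y := mul_pos hl hy
    have h1 : HasDerivAt (fun z : ℝ => -(1 / (α * β)) * (x ^ α * z ^ β))
        (-(1 / (α * β)) * (x ^ α * (β * (l * y) ^ (β - 1)))) (l * y) := by
      have := (Real.hasDerivAt_rpow_const (x := l * y) (p := β) (Or.inl hly.ne'))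
      exact (this.const_mul (x ^ α)).const_mul (-(1 / (α * β)))
    have h2 : HasDerivAt (fun z : ℝ => (1 / (α * β)) * ((α / (α + β)) * x ^ (α + β)
          + (β / (α + β)) * z ^ (α + β)))
        ((1 / (α * β)) * ((β / (α + β)) * ((α + β) * y ^ (α + β - 1)))) y := by
      have := (Real.hasDerivAt_rpow_const (x := y) (p := α + β) (Or.inl hy.ne'))
      exact ((this.const_mul (β / (α + β))).const_add _).const_mul _
    rw [h1.deriv, h2.deriv]
    have hml : (l * y) ^ (β - 1) = l ^ (β - 1) * y ^ (β - 1) :=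
      Real.mul_rpow hl.le hy.le
    have hlc : l ^ (β - 1) * l ^ (1 - β) = 1 := by
      rw [← Real.rpow_add hl]; norm_num
    rw [hml]
    field_simp
    linear_combination (-(y ^ (α + β - 1))) * hlc
end

section
/- Let f, g: ℝ → ℝ with f convex and differentiable, g concave and differentiable, and L = f + g. Fix ỹ > 0 and latent weights w_r > 0 with ∑_r w_r = 1. Then for any ŷ_r ≥ 0 with ŷ = ∑_r ŷ_r, Q := ∑_r w_r·f(ŷ_r/w_r) + g(ỹ) + g'(ỹ)·(ŷ − ỹ) satisfies Q ≥ L(ŷ), and when ŷ_r = w_r·ỹ for all r (so ŷ = ỹ), Q = L(ỹ). -/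
/-!
The convex part is majorized by Jensen's inequality applied to the points `ŷ_r / w_r` with
weights `w_r`, whose barycentre is `ŷ = ∑ ŷ_r`; the concave part lies below its tangent line
at `Y`. At `ŷ_r = w_r Y` every point `ŷ_r / w_r` equals `Y`, so Jensen is an equality and the
tangent term vanishes.
-/

open Finset

theorem ConcaveOn.le_add_deriv_mul_sub {S : Set ℝ} {g : ℝ → ℝ} (hg : ConcaveOn ℝ S g)
    {x y : ℝ} (hx : x ∈ S) (hy : y ∈ S) (hgd : DifferentiableAt ℝ g y) :
    g x ≤ g y + deriv g y * (x - y) := by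
  rcases lt_trichotomy x y with hxy | rfl | hxy
  · have hslope := hg.deriv_le_slope hx hy hxy hgd
    rw [slope_def_field, le_div_iff₀ (sub_pos.2 hxy)] at hslope
    nlinarith
  · simp
  · have hslope := hg.slope_le_deriv hy hx hxy hgd
    rw [slope_def_field, div_le_iff₀ (sub_pos.2 hxy)] at hslope
    nlinarith

section WeightedSplit

variable {ι : Type*} {t : Finset ι} {w y : ι → ℝ}

theorem sum_mul_div_of_ne_zero (hw : ∀ r ∈ t, w r ≠ 0) :
    ∑ r ∈ t, w r * (y r / w r) = ∑ r ∈ t, y r :=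
  sum_congr rfl fun r hr => mul_div_cancel₀ _ (hw r hr)

theorem ConvexOn.map_sum_le_sum_mul_map_div {S : Set ℝ} {f : ℝ → ℝ} (hf : ConvexOn ℝ S f)
    (hw : ∀ r ∈ t, 0 < w r) (hw1 : ∑ r ∈ t, w r = 1) (hS : ∀ r ∈ t, y r / w r ∈ S) :
    f (∑ r ∈ t, y r) ≤ ∑ r ∈ t, w r * f (y r / w r) := by
  have hjensen := hf.map_sum_le (fun r hr => (hw r hr).le) hw1 hS
  simpa only [smul_eq_mul, sum_mul_div_of_ne_zero fun r hr => (hw r hr).ne'] using hjensen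

theorem sum_mul_map_div_of_eq_mul (f : ℝ → ℝ) {Y : ℝ} (hw : ∀ r ∈ t, w r ≠ 0)
    (hw1 : ∑ r ∈ t, w r = 1) (hy : ∀ r ∈ t, y r = w r * Y) :
    ∑ r ∈ t, w r * f (y r / w r) = f Y := by
  have hpoint : ∀ r ∈ t, y r / w r = Y := fun r hr => by
    rw [hy r hr, mul_div_cancel_left₀ _ (hw r hr)]
  rw [sum_congr rfl fun r hr => by rw [hpoint r hr], ← sum_mul, hw1, one_mul]

theorem sum_eq_of_eq_mul {Y : ℝ} (hw1 : ∑ r ∈ t, w r = 1) (hy : ∀ r ∈ t, y r = w r * Y) :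
    ∑ r ∈ t, y r = Y := by
  rw [sum_congr rfl hy, ← sum_mul, hw1, one_mul]

end WeightedSplit

theorem stmt_16_general (f g : ℝ → ℝ)
    (hf : ConvexOn ℝ Set.univ f)
    (hg : ConcaveOn ℝ Set.univ g) (hgd : Differentiable ℝ g)
    (Y : ℝ)
    (ι : Type) (s : Finset ι) (w : ι → ℝ)
    (hw : ∀ r ∈ s, 0 < w r) (hw1 : (∑ r ∈ s, w r) = 1)
    (yh : ι → ℝ) :
    (f (∑ r ∈ s, yh r) + g (∑ r ∈ s, yh r) ≤
      (∑ r ∈ s, w r * f (yh r / w r)) + g Y + deriv g Y * ((∑ r ∈ s, yh r) - Y)) ∧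
    ((∀ r ∈ s, yh r = w r * Y) →
      (∑ r ∈ s, w r * f (yh r / w r)) + g Y + deriv g Y * ((∑ r ∈ s, yh r) - Y) =
        f Y + g Y) := by
  refine ⟨?_, fun hyh => ?_⟩
  · have hjensen := hf.map_sum_le_sum_mul_map_div hw hw1 fun r _ => Set.mem_univ (yh r / w r)
    have htangent := hg.le_add_deriv_mul_sub (Set.mem_univ (∑ r ∈ s, yh r)) (Set.mem_univ Y)
      (hgd Y)
    linarith
  · rw [sum_mul_map_div_of_eq_mul f (fun r hr => (hw r hr).ne') hw1 hyh,
      sum_eq_of_eq_mul hw1 hyh, sub_self, mul_zero, add_zero]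

/-- One-dimensional surrogate construction: Jensen on the convex part and a
tangent line on the concave part give an upper bound that is tight at the
current point. -/
theorem stmt_16 (f g : ℝ → ℝ)
    (hf : ConvexOn ℝ Set.univ f) (hfd : Differentiable ℝ f)
    (hg : ConcaveOn ℝ Set.univ g) (hgd : Differentiable ℝ g)
    (Y : ℝ) (hY : 0 < Y)
    (ι : Type) (s : Finset ι) (w : ι → ℝ)
    (hw : ∀ r ∈ s, 0 < w r) (hw1 : (∑ r ∈ s, w r) = 1)
    (yh : ι → ℝ) (hyh : ∀ r ∈ s, 0 ≤ yh r) :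
    (f (∑ r ∈ s, yh r) + g (∑ r ∈ s, yh r) ≤
      (∑ r ∈ s, w r * f (yh r / w r)) + g Y + deriv g Y * ((∑ r ∈ s, yh r) - Y)) ∧
    ((∀ r ∈ s, yh r = w r * Y) →
      (∑ r ∈ s, w r * f (yh r / w r)) + g Y + deriv g Y * ((∑ r ∈ s, yh r) - Y) =
        f Y + g Y) :=
  stmt_16_general f g hf hg hgd Y ι s w hw hw1 yh
end
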